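/- arXiv:1202.5349 — 3 statements merged into one kernel-verified Lean document; each statement's English description precedes it below -/
import Mathlib

section
/- Let s and r be independent random variables, exponentially distributed with means Ω_S > 0 and Ω_R > 0 respectively, and let ρ > 0. Then E[1{r < ρ·s}·log₂(1+s)] = (1/ln 2)·[ e^{1/Ω_S}·E₁(1/Ω_S) − (Ω_R/(Ω_R+ρΩ_S))·exp((Ω_R+ρΩ_S)/(Ω_S·Ω_R))·E₁((Ω_R+ρΩ_S)/(Ω_S·Ω_R)) ]. -/
/-!
Independence makes the joint law of `(s, r)` the product of the two exponential laws, so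
integrating out `r` first replaces the indicator by `P(r < ρ x) = 1 - e^{-ρ x / Ω_R}`. The
expectation is then a difference of two values of `L(l) = ∫₀^∞ log(1 + x) e^{-l x} dx`, at
`l = 1/Ω_S` and `l = 1/Ω_S + ρ/Ω_R`. Integrating by parts gives
`L(l) = l⁻¹ ∫₀^∞ e^{-l x} / (1 + x) dx`, and the substitution `t = l (1 + x)` turns this
integral into `e^l E₁(l)`.
-/

open MeasureTheory ProbabilityTheory

/-- The exponential integral function `E₁(x) = ∫_x^∞ e^{-t}/t dt`. -/
noncomputable def expIntE1 (x : ℝ) : ℝ := ∫ t in Set.Ioi x, Real.exp (-t) / t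

/-- The law of an exponentially distributed random variable with mean `Ω`:
the measure on `ℝ` with density `(1/Ω) e^{-x/Ω}` on `[0,∞)` with respect to
Lebesgue measure. -/
noncomputable def expLaw (Ω : ℝ) : Measure ℝ :=
  (volume.restrict (Set.Ici (0 : ℝ))).withDensity
    (fun x => ENNReal.ofReal ((1 / Ω) * Real.exp (-x / Ω)))

open Set Filter Real Topology

section ExpMeasure

lemma expMeasure_eq_withDensity_Ici (r : ℝ) :
    expMeasure r = (volume.restrict (Ici 0)).withDensity
      (fun x => ENNReal.ofReal (r * exp (-(r * x)))) := by
  rw [← withDensity_indicator measurableSet_Ici, expMeasure, gammaMeasure]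
  congr 1
  funext x
  change exponentialPDF r x = _
  rw [exponentialPDF_eq]
  by_cases hx : 0 ≤ x <;> simp [hx]

lemma expLaw_eq_expMeasure (Ω : ℝ) : expLaw Ω = expMeasure Ω⁻¹ := by
  rw [expLaw, expMeasure_eq_withDensity_Ici]
  simp_rw [one_div, neg_div, div_eq_inv_mul]

instance nullSingletonClass_expMeasure (r : ℝ) : NullSingletonClass (expMeasure r) := by
  rw [expMeasure_eq_withDensity_Ici]; infer_instance

lemma integral_expMeasure {r : ℝ} (hr : 0 ≤ r) (g : ℝ → ℝ) :
    ∫ x, g x ∂expMeasure r = ∫ x in Ioi 0, r * exp (-(r * x)) * g x := by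
  rw [expMeasure_eq_withDensity_Ici, ← Measure.restrict_congr_set Ioi_ae_eq_Ici,
    integral_withDensity_eq_integral_toReal_smul (by fun_prop)
      (ae_of_all _ fun _ => ENNReal.ofReal_lt_top)]
  simp_rw [ENNReal.toReal_ofReal (by positivity : 0 ≤ r * exp _), smul_eq_mul]

lemma integrable_expMeasure_iff {r : ℝ} (hr : 0 ≤ r) {g : ℝ → ℝ} :
    Integrable g (expMeasure r) ↔
      IntegrableOn (fun x => g x * (r * exp (-(r * x)))) (Ioi 0) := by
  rw [expMeasure_eq_withDensity_Ici, ← Measure.restrict_congr_set Ioi_ae_eq_Ici,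
    integrable_withDensity_iff (by fun_prop) (ae_of_all _ fun _ => ENNReal.ofReal_lt_top)]
  simp_rw [ENNReal.toReal_ofReal (by positivity : 0 ≤ r * exp _)]
  rfl

lemma expMeasure_real_Iio {r : ℝ} (hr : 0 < r) {t : ℝ} (ht : 0 ≤ t) :
    (expMeasure r).real (Iio t) = 1 - exp (-(r * t)) := by
  have := isProbabilityMeasure_expMeasure hr
  rw [measureReal_congr Iio_ae_eq_Iic, ← cdf_eq_real, cdf_expMeasure_eq hr, if_pos ht]

end ExpMeasure

lemma integral_indicator_comp_fst_prod {α β : Type*} [MeasurableSpace α] [MeasurableSpace β]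
    {μ : Measure α} {ν : Measure β} [SFinite μ] [IsFiniteMeasure ν]
    {S : Set (α × β)} (hS : MeasurableSet S) {f : α → ℝ} (hf : Integrable f μ) :
    ∫ p, S.indicator (fun p => f p.1) p ∂μ.prod ν
      = ∫ x, ν.real (Prod.mk x ⁻¹' S) * f x ∂μ := by
  rw [integral_prod _ ((hf.comp_fst ν).indicator hS)]
  congr 1
  funext x
  rw [← smul_eq_mul, ← integral_indicator_const _ (measurable_prodMk_left hS)]
  rfl

section LaplaceTransforms

variable {l : ℝ}

lemma log_one_add_le_self {x : ℝ} (hx : -1 < x) : log (1 + x) ≤ x := by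
  linarith [log_le_sub_one_of_pos (by linarith : 0 < 1 + x)]

lemma integrableOn_log_one_add_mul_exp_neg_mul (hl : 0 < l) :
    IntegrableOn (fun x => log (1 + x) * exp (-(l * x))) (Ioi 0) := by
  have hdom : IntegrableOn (fun x => x * exp (-(l * x))) (Ioi 0) := by
    simpa [neg_mul] using
      integrableOn_rpow_mul_exp_neg_mul_rpow (s := 1) (p := 1) (by norm_num) one_pos hl
  refine hdom.mono' (by fun_prop) ?_
  filter_upwards [ae_restrict_mem measurableSet_Ioi] with x (hx : 0 < x)
  rw [norm_of_nonneg (mul_nonneg (log_nonneg (by linarith)) (exp_pos _).le)]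
  exact mul_le_mul_of_nonneg_right (log_one_add_le_self (by linarith)) (exp_pos _).le

lemma integrableOn_exp_neg_mul_div_one_add (hl : 0 < l) :
    IntegrableOn (fun x => exp (-(l * x)) / (1 + x)) (Ioi 0) := by
  refine (exp_neg_integrableOn_Ioi 0 hl).mono'
    (by fun_prop : Measurable _).aestronglyMeasurable ?_
  filter_upwards [ae_restrict_mem measurableSet_Ioi] with x (hx : 0 < x)
  rw [norm_of_nonneg (by positivity), neg_mul]
  exact div_le_self (exp_pos _).le (by linarith)

lemma integral_exp_neg_mul_div_one_add (hl : 0 < l) :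
    ∫ x in Ioi 0, exp (-(l * x)) / (1 + x) = exp l * expIntE1 l := by
  have hshift : ∫ x in Ioi 0, exp (-(l * (x + 1))) / (l * (x + 1))
      = ∫ y in Ioi 1, exp (-(l * y)) / (l * y) := by
    simpa using (measurePreserving_add_right volume (1 : ℝ)).setIntegral_preimage_emb
      (measurableEmbedding_addRight 1) (fun y => exp (-(l * y)) / (l * y)) (Ioi 1)
  have hscale := integral_comp_mul_left_Ioi (fun t => exp (-t) / t) 1 hl
  rw [mul_one, smul_eq_mul] at hscale
  calc ∫ x in Ioi 0, exp (-(l * x)) / (1 + x)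
      = ∫ x in Ioi 0, l * exp l * (exp (-(l * (x + 1))) / (l * (x + 1))) := by
        refine setIntegral_congr_fun measurableSet_Ioi fun x (hx : 0 < x) => ?_
        rw [show -(l * (x + 1)) = -(l * x) + -l by ring, exp_add, exp_neg l]
        field_simp
        ring
    _ = exp l * expIntE1 l := by
        rw [integral_const_mul, hshift, hscale, expIntE1]
        field_simp

lemma tendsto_log_one_add_mul_exp_neg_mul_atTop (hl : 0 < l) :
    Tendsto (fun x => log (1 + x) * exp (-(l * x))) atTop (𝓝 0) := by
  have hdom : Tendsto (fun x => x * exp (-(l * x))) atTop (𝓝 0) := by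
    simpa [neg_mul] using tendsto_rpow_mul_exp_neg_mul_atTop_nhds_zero 1 l hl
  refine squeeze_zero' ?_ ?_ hdom
  · filter_upwards [eventually_ge_atTop 0] with x hx
    exact mul_nonneg (log_nonneg (by linarith)) (exp_pos _).le
  · filter_upwards [eventually_ge_atTop 0] with x hx
    exact mul_le_mul_of_nonneg_right (log_one_add_le_self (by linarith)) (exp_pos _).le

lemma integral_log_one_add_mul_exp_neg_mul (hl : 0 < l) :
    ∫ x in Ioi 0, log (1 + x) * exp (-(l * x)) = l⁻¹ * exp l * expIntE1 l := by
  set v : ℝ → ℝ := fun x => l⁻¹ * -exp (-(l * x))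
  have hu : ∀ x ∈ Ioi (0 : ℝ), HasDerivAt (fun x => log (1 + x)) (1 + x)⁻¹ x :=
    fun x (hx : 0 < x) => by
      simpa using ((hasDerivAt_id x).const_add 1).log (by simp; linarith)
  have hv : ∀ x ∈ Ioi (0 : ℝ), HasDerivAt v (exp (-(l * x))) x := fun x _ => by
    simpa only [inv_mul_cancel_left₀ hl.ne'] using
      (hasDerivAt_neg_exp_mul_exp (r := l) (x := x)).const_mul l⁻¹
  have hu'v : IntegrableOn (fun x => (1 + x)⁻¹ * v x) (Ioi 0) :=
    IntegrableOn.congr_fun ((integrableOn_exp_neg_mul_div_one_add hl).const_mul (-l⁻¹))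
      (fun x _ => by simp only [v]; ring) measurableSet_Ioi
  have h_zero : Tendsto (fun x => log (1 + x) * v x) (𝓝[>] 0) (𝓝 0) := by
    have : ContinuousAt (fun x => log (1 + x) * v x) 0 := by fun_prop (disch := norm_num)
    simpa using this.tendsto.mono_left nhdsWithin_le_nhds
  have h_infty : Tendsto (fun x => log (1 + x) * v x) atTop (𝓝 0) := by
    have := (tendsto_log_one_add_mul_exp_neg_mul_atTop hl).const_mul (-l⁻¹)
    rw [mul_zero] at this
    exact this.congr fun x => by simp only [v]; ring
  rw [integral_Ioi_mul_deriv_eq_deriv_mul hu hv (integrableOn_log_one_add_mul_exp_neg_mul hl) hu'v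
    h_zero h_infty]
  have hu'v_eq : ∫ x in Ioi 0, (1 + x)⁻¹ * v x = -l⁻¹ * (exp l * expIntE1 l) := by
    rw [← integral_exp_neg_mul_div_one_add hl, ← integral_const_mul]
    congr 1 with x
    simp only [v]
    ring
  rw [hu'v_eq]
  ring

end LaplaceTransforms

section ArrivalRate
variable {a b : ℝ}

lemma integrable_logb_one_add_expMeasure (ha : 0 < a) :
    Integrable (fun x => logb 2 (1 + x)) (expMeasure a) := by
  rw [integrable_expMeasure_iff ha.le]
  refine IntegrableOn.congr_fun
    ((integrableOn_log_one_add_mul_exp_neg_mul ha).const_mul (a / log 2)) (fun x _ => ?_)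
    measurableSet_Ioi
  simp only [logb]
  ring

lemma integral_expMeasure_real_Iio_mul_logb_one_add (ha : 0 < a) (hb : 0 < b) {ρ : ℝ}
    (hρ : 0 ≤ ρ) :
    ∫ x, (expMeasure b).real (Iio (ρ * x)) * logb 2 (1 + x) ∂expMeasure a
      = (1 / log 2) * (exp a * expIntE1 a
          - a / (a + ρ * b) * exp (a + ρ * b) * expIntE1 (a + ρ * b)) := by
  have hab : 0 < a + ρ * b := by positivity
  have hintegrand : ∀ x ∈ Ioi (0 : ℝ),
      a * exp (-(a * x)) * ((expMeasure b).real (Iio (ρ * x)) * logb 2 (1 + x))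
        = a / log 2 * (log (1 + x) * exp (-(a * x)))
          - a / log 2 * (log (1 + x) * exp (-((a + ρ * b) * x))) := fun x (hx : 0 < x) => by
    rw [expMeasure_real_Iio hb (by positivity),
      show -((a + ρ * b) * x) = -(a * x) + -(b * (ρ * x)) by ring, exp_add, logb]
    ring
  rw [integral_expMeasure ha.le, setIntegral_congr_fun measurableSet_Ioi hintegrand,
    integral_sub ((integrableOn_log_one_add_mul_exp_neg_mul ha).const_mul _)
      ((integrableOn_log_one_add_mul_exp_neg_mul hab).const_mul _),
    integral_const_mul, integral_const_mul, integral_log_one_add_mul_exp_neg_mul ha,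
    integral_log_one_add_mul_exp_neg_mul hab]
  field_simp

end ArrivalRate

/-- For independent exponential SNRs `s`, `r` with means `Ω_S`, `Ω_R` and
threshold `ρ > 0`, the average arrival rate into the relay's buffer is
`E[1{r < ρs} log₂(1+s)] = (1/ln 2)[e^{1/Ω_S} E₁(1/Ω_S)
− (Ω_R/(Ω_R+ρΩ_S)) e^{(Ω_R+ρΩ_S)/(Ω_SΩ_R)} E₁((Ω_R+ρΩ_S)/(Ω_SΩ_R))]`. -/
theorem arrival_rate_rayleigh
    {Ω : Type*} [MeasurableSpace Ω] (P : Measure Ω) [IsProbabilityMeasure P]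
    (s r : Ω → ℝ) (hs : Measurable s) (hr : Measurable r)
    (ΩS ΩR : ℝ) (hΩS : 0 < ΩS) (hΩR : 0 < ΩR)
    (hlaws : P.map s = expLaw ΩS) (hlawr : P.map r = expLaw ΩR)
    (hindep : IndepFun s r P) (ρ : ℝ) (hρ : 0 < ρ) :
    ∫ ω, (if r ω < ρ * s ω then Real.logb 2 (1 + s ω) else 0) ∂P
      = (1 / Real.log 2)
          * (Real.exp (1 / ΩS) * expIntE1 (1 / ΩS)
              - (ΩR / (ΩR + ρ * ΩS))
                  * Real.exp ((ΩR + ρ * ΩS) / (ΩS * ΩR))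
                  * expIntE1 ((ΩR + ρ * ΩS) / (ΩS * ΩR))) := by
  set S : Set (ℝ × ℝ) := {p | p.2 < ρ * p.1}
  have hS : MeasurableSet S := measurableSet_lt measurable_snd (measurable_fst.const_mul ρ)
  have hjoint :
      P.map (fun ω => (s ω, r ω)) = (expMeasure ΩS⁻¹).prod (expMeasure ΩR⁻¹) := by
    rw [hindep.map_prod_eq_prod_map_map hs.aemeasurable hr.aemeasurable, hlaws, hlawr,
      expLaw_eq_expMeasure, expLaw_eq_expMeasure]
  have := isProbabilityMeasure_expMeasure (inv_pos.2 hΩS)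
  have := isProbabilityMeasure_expMeasure (inv_pos.2 hΩR)
  have hrate : (ΩR + ρ * ΩS) / (ΩS * ΩR) = ΩS⁻¹ + ρ * ΩR⁻¹ := by field_simp
  have hweight : ΩR / (ΩR + ρ * ΩS) = ΩS⁻¹ / (ΩS⁻¹ + ρ * ΩR⁻¹) := by field_simp
  calc ∫ ω, (if r ω < ρ * s ω then logb 2 (1 + s ω) else 0) ∂P
      = ∫ p, S.indicator (fun p => logb 2 (1 + p.1)) p
          ∂(expMeasure ΩS⁻¹).prod (expMeasure ΩR⁻¹) := by
        have hf : Measurable fun p : ℝ × ℝ => logb 2 (1 + p.1) :=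
          (measurable_const.add measurable_fst).log.div_const _
        rw [← hjoint,
          integral_map (hs.prodMk hr).aemeasurable (hf.indicator hS).aestronglyMeasurable]
        rfl
    _ = ∫ x, (expMeasure ΩR⁻¹).real (Iio (ρ * x)) * logb 2 (1 + x) ∂expMeasure ΩS⁻¹ :=
        integral_indicator_comp_fst_prod hS (integrable_logb_one_add_expMeasure (by positivity))
    _ = _ := by
        rw [integral_expMeasure_real_Iio_mul_logb_one_add (by positivity) (by positivity) hρ.le,
          hrate, hweight, one_div ΩS]
end

section
/- The function g(Ω) = 2 − e^{2/Ω}·E₁(2/Ω)/(e^{1/Ω}·E₁(1/Ω)) is strictly decreasing on (0, ∞), i.e., the throughput gain ratio τ_max/τ_conv,2 of buffer-aided relaying with adaptive link selection over conventional buffer-aided relaying for symmetric Rayleigh links monotonically increases as the mean SNR Ω decreases. -/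
/-!
Write `F(x) = eˣ E₁(x) = ∫₀^∞ e^{-s}/(s+x) ds`. Then `F' = F - 1/x`, and integrating by parts
gives `∫₀^∞ e^{-s}/(s+x)² ds = 1/x - F(x)`, so the (strict) Cauchy–Schwarz inequality
against the probability measure `e^{-s} ds` yields `F(x)² < 1/x - F(x)`. This says exactly that
`1/F(t) - t` is strictly increasing; comparing it at `u` and `2u` shows that the derivative of
`F(2u)/F(u)` is negative. The gain ratio is `2 - F(2u)/F(u)` with `u = 1/Ω`.
-/

open Real MeasureTheory

open Set Filter Topology

noncomputable def scaledExpIntE1 (x : ℝ) : ℝ := exp x * expIntE1 x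

lemma integrableOn_exp_neg_div_add_pow {a c : ℝ} (hac : 0 < a + c) (n : ℕ) :
    IntegrableOn (fun t => exp (-t) / (t + c) ^ n) (Ioi a) := by
  refine ((exp_neg_integrableOn_Ioi a one_pos).const_mul ((a + c) ^ n)⁻¹).mono'
    (by fun_prop : Measurable fun t : ℝ => exp (-t) / (t + c) ^ n).aestronglyMeasurable ?_
  filter_upwards [ae_restrict_mem measurableSet_Ioi] with t (ht : a < t)
  have htc : 0 < t + c := by linarith
  rw [Real.norm_of_nonneg (by positivity), neg_one_mul, div_eq_inv_mul]
  gcongr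

lemma integrableOn_exp_neg_div {x : ℝ} (hx : 0 < x) :
    IntegrableOn (fun t => exp (-t) / t) (Ioi x) := by
  simpa using integrableOn_exp_neg_div_add_pow (c := 0) (by simpa using hx) 1

lemma expIntE1_pos {x : ℝ} (hx : 0 < x) : 0 < expIntE1 x := by
  have hpos : ∀ t ∈ Ioi x, 0 < exp (-t) / t := fun t (ht : x < t) => by
    have := hx.trans ht
    positivity
  rw [expIntE1, setIntegral_pos_iff_support_of_nonneg_ae
    ((ae_restrict_iff' measurableSet_Ioi).2 (.of_forall fun t ht => (hpos t ht).le))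
    (integrableOn_exp_neg_div hx)]
  have hsupp : Ioi x ⊆ Function.support (fun t => exp (-t) / t) ∩ Ioi x :=
    fun t ht => ⟨(hpos t ht).ne', ht⟩
  exact (by simp : (0 : ENNReal) < volume (Ioi x)).trans_le (measure_mono hsupp)

lemma scaledExpIntE1_pos {x : ℝ} (hx : 0 < x) : 0 < scaledExpIntE1 x :=
  mul_pos (exp_pos x) (expIntE1_pos hx)

lemma scaledExpIntE1_eq_integral (x : ℝ) :
    scaledExpIntE1 x = ∫ s in Ioi (0 : ℝ), exp (-s) / (s + x) := by
  have hshift : expIntE1 x = ∫ s in Ioi (0 : ℝ), exp (-(s + x)) / (s + x) := by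
    rw [expIntE1, ← (measurePreserving_add_right volume x).setIntegral_preimage_emb
      (measurableEmbedding_addRight x)]
    congr 1
    ext s
    simp
  rw [scaledExpIntE1, hshift, ← integral_const_mul]
  congr 1 with s
  rw [neg_add, exp_add, mul_div_assoc', mul_left_comm, ← exp_add]
  simp

lemma integral_exp_neg_div_add_sq {x : ℝ} (hx : 0 < x) :
    ∫ s in Ioi (0 : ℝ), exp (-s) / (s + x) ^ 2 = 1 / x - scaledExpIntE1 x := by
  have hx' : 0 < 0 + x := by simpa using hx
  have hint1 : IntegrableOn (fun s => exp (-s) / (s + x)) (Ioi 0) := by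
    simpa using integrableOn_exp_neg_div_add_pow hx' 1
  have hderiv : ∀ s ∈ Ici (0 : ℝ), HasDerivAt (fun s => -(exp (-s) / (s + x)))
      (exp (-s) / (s + x) + exp (-s) / (s + x) ^ 2) s := fun s (hs : 0 ≤ s) => by
    have hsx : s + x ≠ 0 := by positivity
    refine (((hasDerivAt_neg s).exp).div ((hasDerivAt_id s).add_const x) hsx).neg.congr_deriv ?_
    simp only [id]
    field_simp
    ring
  have hlim : Tendsto (fun s => -(exp (-s) / (s + x))) atTop (𝓝 0) := by
    simpa [div_eq_mul_inv] using (tendsto_exp_neg_atTop_nhds_zero.mul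
      (tendsto_inv_atTop_zero.comp (tendsto_atTop_add_const_right _ x tendsto_id))).neg
  have hparts := integral_Ioi_of_hasDerivAt_of_tendsto' hderiv
    (hint1.add (integrableOn_exp_neg_div_add_pow hx' 2)) hlim
  rw [integral_add hint1 (integrableOn_exp_neg_div_add_pow hx' 2),
    ← scaledExpIntE1_eq_integral] at hparts
  simp only [neg_zero, exp_zero, zero_add, one_div, sub_neg_eq_add] at hparts
  rw [one_div]
  linarith

lemma sq_add_scaledExpIntE1_lt {x : ℝ} (hx : 0 < x) :
    scaledExpIntE1 x ^ 2 + scaledExpIntE1 x < 1 / x := by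
  set c := scaledExpIntE1 x with hc
  have hint : ∀ n : ℕ, IntegrableOn (fun s => exp (-s) / (s + x) ^ n) (Ioi 0) :=
    integrableOn_exp_neg_div_add_pow (by simpa using hx)
  have hdiff : IntegrableOn (fun s => exp (-s) / (s + x) ^ 2 - 2 * c * (exp (-s) / (s + x) ^ 1))
      (Ioi 0) := (hint 2).sub ((hint 1).const_mul _)
  have hsum : IntegrableOn (fun s => exp (-s) / (s + x) ^ 2 - 2 * c * (exp (-s) / (s + x) ^ 1)
      + c ^ 2 * (exp (-s) / (s + x) ^ 0)) (Ioi 0) := hdiff.add ((hint 0).const_mul _)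
  have hsquare : EqOn (fun s => exp (-s) / (s + x) ^ 2 - 2 * c * (exp (-s) / (s + x) ^ 1)
      + c ^ 2 * (exp (-s) / (s + x) ^ 0)) (fun s => exp (-s) * ((s + x)⁻¹ - c) ^ 2) (Ioi 0) :=
    fun s (hs : 0 < s) => by
      have : s + x ≠ 0 := by positivity
      field_simp
      ring
  have hexpand : ∫ s in Ioi (0 : ℝ), exp (-s) * ((s + x)⁻¹ - c) ^ 2 = 1 / x - c - c ^ 2 := by
    have hc1 : ∫ s in Ioi (0 : ℝ), exp (-s) / (s + x) ^ 1 = c := by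
      simp [hc, scaledExpIntE1_eq_integral]
    rw [← setIntegral_congr_fun measurableSet_Ioi hsquare,
      integral_add hdiff ((hint 0).const_mul _),
      integral_sub (hint 2) ((hint 1).const_mul _), integral_const_mul, integral_const_mul,
      integral_exp_neg_div_add_sq hx, hc1]
    simp only [pow_zero, div_one, integral_exp_neg_Ioi_zero]
    ring
  have hpos : 0 < ∫ s in Ioi (0 : ℝ), exp (-s) * ((s + x)⁻¹ - c) ^ 2 := by
    have hsupp : Ioi 0 \ {c⁻¹ - x} ⊆
        Function.support (fun s => exp (-s) * ((s + x)⁻¹ - c) ^ 2) ∩ Ioi 0 := by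
      rintro s ⟨hs, hsc⟩
      refine ⟨mul_ne_zero (exp_pos _).ne' (pow_ne_zero 2 (sub_ne_zero.2 fun h => hsc ?_)), hs⟩
      rw [mem_singleton_iff, ← h, inv_inv]
      ring
    rw [setIntegral_pos_iff_support_of_nonneg_ae (.of_forall fun s => by positivity)
      (hsum.congr_fun hsquare measurableSet_Ioi)]
    refine lt_of_lt_of_le ?_ (measure_mono hsupp)
    simp [measure_sdiff_null (measure_singleton _)]
  linarith

lemma expIntE1_eq_sub_intervalIntegral {a y : ℝ} (ha : 0 < a) (hay : a ≤ y) :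
    expIntE1 y = expIntE1 a - ∫ t in a..y, exp (-t) / t := by
  rw [expIntE1, expIntE1,
    ← intervalIntegral.integral_Ioi_sub_Ioi (integrableOn_exp_neg_div ha) hay, sub_sub_cancel]

lemma hasDerivAt_expIntE1 {x : ℝ} (hx : 0 < x) : HasDerivAt expIntE1 (-(exp (-x) / x)) x := by
  have hx2 : 0 < x / 2 := half_pos hx
  have hint : IntervalIntegrable (fun t => exp (-t) / t) volume (x / 2) x :=
    (intervalIntegrable_iff_integrableOn_Ioc_of_le (half_le_self hx.le)).2
      ((integrableOn_exp_neg_div hx2).mono_set Ioc_subset_Ioi_self)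
  have hmeas : StronglyMeasurableAtFilter (fun t => exp (-t) / t) (𝓝 x) :=
    (by fun_prop : Measurable fun t : ℝ => exp (-t) / t).stronglyMeasurable
      |>.stronglyMeasurableAtFilter
  have hcont : ContinuousAt (fun t => exp (-t) / t) x := by fun_prop (disch := exact hx.ne')
  refine ((intervalIntegral.integral_hasDerivAt_right hint hmeas hcont).const_sub
    (expIntE1 (x / 2))).congr_of_eventuallyEq ?_
  filter_upwards [Ioi_mem_nhds (half_lt_self hx)] with y hy
  exact expIntE1_eq_sub_intervalIntegral hx2 (le_of_lt hy)

lemma hasDerivAt_scaledExpIntE1 {x : ℝ} (hx : 0 < x) :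
    HasDerivAt scaledExpIntE1 (scaledExpIntE1 x - 1 / x) x := by
  refine ((hasDerivAt_exp x).mul (hasDerivAt_expIntE1 hx)).congr_deriv ?_
  rw [scaledExpIntE1, mul_neg, mul_div_assoc', ← exp_add, add_neg_cancel, exp_zero]
  ring

lemma strictMonoOn_inv_scaledExpIntE1_sub :
    StrictMonoOn (fun t => (scaledExpIntE1 t)⁻¹ - t) (Ioi 0) := by
  have hderiv : ∀ t ∈ Ioi (0 : ℝ), HasDerivAt (fun t => (scaledExpIntE1 t)⁻¹ - t)
      (-(scaledExpIntE1 t - 1 / t) / scaledExpIntE1 t ^ 2 - 1) t := fun t ht =>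
    ((hasDerivAt_scaledExpIntE1 ht).inv (scaledExpIntE1_pos ht).ne').sub (hasDerivAt_id t)
  refine strictMonoOn_of_deriv_pos (convex_Ioi 0)
    (fun t ht => (hderiv t ht).continuousAt.continuousWithinAt) fun t ht => ?_
  rw [interior_Ioi] at ht
  have hF := scaledExpIntE1_pos ht
  have hkey := sq_add_scaledExpIntE1_lt ht
  rw [(hderiv t ht).deriv, lt_sub_iff_add_lt, zero_add, lt_div_iff₀ (by positivity)]
  linarith

lemma strictAntiOn_scaledExpIntE1_two_mul_div :
    StrictAntiOn (fun u => scaledExpIntE1 (2 * u) / scaledExpIntE1 u) (Ioi 0) := by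
  have hderiv : ∀ u ∈ Ioi (0 : ℝ), HasDerivAt (fun u => scaledExpIntE1 (2 * u) / scaledExpIntE1 u)
      (((scaledExpIntE1 (2 * u) - 1 / (2 * u)) * (2 * 1) * scaledExpIntE1 u
        - scaledExpIntE1 (2 * u) * (scaledExpIntE1 u - 1 / u)) / scaledExpIntE1 u ^ 2) u :=
    fun u (hu : 0 < u) =>
      (((hasDerivAt_scaledExpIntE1 (by positivity)).comp u
        ((hasDerivAt_id u).const_mul 2)).div (hasDerivAt_scaledExpIntE1 hu)
        (scaledExpIntE1_pos hu).ne')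
  refine strictAntiOn_of_deriv_neg (convex_Ioi 0)
    (fun u hu => (hderiv u hu).continuousAt.continuousWithinAt) fun u hu => ?_
  rw [interior_Ioi, mem_Ioi] at hu
  rw [(hderiv u hu).deriv]
  have h2u : 0 < 2 * u := by positivity
  have ha := scaledExpIntE1_pos hu
  have hb := scaledExpIntE1_pos h2u
  have hmono := strictMonoOn_inv_scaledExpIntE1_sub hu h2u (by linarith)
  set a := scaledExpIntE1 u
  set b := scaledExpIntE1 (2 * u)
  have hcross : u * a * b + b - a < 0 := by
    have h := mul_lt_mul_of_pos_right hmono (mul_pos ha hb)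
    have hl : (a⁻¹ - u) * (a * b) = b - u * a * b := by field_simp
    have hr : (b⁻¹ - 2 * u) * (a * b) = a - 2 * u * a * b := by field_simp
    linarith
  have hnum : (b - 1 / (2 * u)) * (2 * 1) * a - b * (a - 1 / u) = (u * a * b + b - a) / u := by
    field_simp
    ring
  rw [hnum]
  exact div_neg_of_neg_of_pos (div_neg_of_neg_of_pos hcross hu) (by positivity)

/-- The throughput gain ratio
`g(Ω) = 2 − e^{2/Ω}E₁(2/Ω)/(e^{1/Ω}E₁(1/Ω))` of buffer-aided relaying with
adaptive link selection over conventional buffer-aided relaying for symmetric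
Rayleigh links is strictly decreasing in the mean SNR `Ω` on `(0,∞)`. -/
theorem gain_ratio_strictAnti :
    StrictAntiOn
      (fun Ω : ℝ => 2 - Real.exp (2 / Ω) * expIntE1 (2 / Ω)
          / (Real.exp (1 / Ω) * expIntE1 (1 / Ω)))
      (Set.Ioi 0) := by
  intro Ω₁ (h₁ : 0 < Ω₁) Ω₂ (h₂ : 0 < Ω₂) hlt
  have hratio := strictAntiOn_scaledExpIntE1_two_mul_div (one_div_pos.2 h₂) (one_div_pos.2 h₁)
    (one_div_lt_one_div_of_lt h₁ hlt)
  simp only [mul_one_div] at hratio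
  change 2 - scaledExpIntE1 (2 / Ω₂) / scaledExpIntE1 (1 / Ω₂)
    < 2 - scaledExpIntE1 (2 / Ω₁) / scaledExpIntE1 (1 / Ω₁)
  linarith
end

section
/- For all Ω_S > 0 and Ω_R > 0, exp((Ω_R+Ω_S)/(Ω_S·Ω_R))·E₁((Ω_R+Ω_S)/(Ω_S·Ω_R)) ≤ min( e^{1/Ω_S}·E₁(1/Ω_S), e^{1/Ω_R}·E₁(1/Ω_R) ); equivalently, for Rayleigh fading links the throughput of conventional relaying without buffer never exceeds that of conventional relaying with buffer: τ_conv,1 ≤ τ_conv,2. -/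
open Real MeasureTheory Set

lemma integrable_aux {a : ℝ} (ha : 0 < a) :
    IntegrableOn (fun u : ℝ => Real.exp (-u) / (u + a)) (Ioi 0) := by
  have h1 : IntegrableOn (fun u : ℝ => Real.exp (-(1:ℝ) * u) * (1/a)) (Ioi 0) :=
    (exp_neg_integrableOn_Ioi 0 one_pos).mul_const _
  refine h1.mono' ?_ ?_
  · exact ((Real.measurable_exp.comp measurable_neg).div
      (measurable_id.add_const a)).aestronglyMeasurable
  · filter_upwards [ae_restrict_mem measurableSet_Ioi] with u hu
    have hu0 : (0:ℝ) < u := hu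
    rw [Real.norm_eq_abs, abs_div, abs_of_pos (exp_pos _), abs_of_pos (by linarith)]
    rw [div_le_iff₀ (by linarith)]
    have : Real.exp (-1 * u) * (1/a) * (u + a) = Real.exp (-u) * ((u+a)/a) := by
      ring_nf
    rw [this]
    nth_rewrite 1 [show Real.exp (-u) = Real.exp (-u) * 1 by ring]
    gcongr
    rw [le_div_iff₀ ha]; linarith

lemma expIntE1_shift (x : ℝ) :
    Real.exp x * expIntE1 x = ∫ u in Ioi (0:ℝ), Real.exp (-u) / (u + x) := by
  have h1 : expIntE1 x = ∫ u in Ioi (0:ℝ), Real.exp (-(u+x)) / (u + x) := by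
    unfold expIntE1
    rw [← integral_indicator measurableSet_Ioi, ← integral_indicator measurableSet_Ioi,
      ← integral_add_right_eq_self (μ := volume)
        (Set.indicator (Ioi x) fun t => Real.exp (-t) / t) x]
    congr 1; ext u
    by_cases h : 0 < u
    · rw [indicator_of_mem (by simp only [mem_Ioi]; linarith),
        indicator_of_mem (by simpa using h)]
    · rw [indicator_of_notMem (by simp only [mem_Ioi]; push_neg; linarith),
        indicator_of_notMem (by simpa using h)]
  rw [h1, ← integral_const_mul]
  congr 1; ext u
  rw [mul_div_assoc', ← Real.exp_add]
  ring_nf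

lemma key_mono {a b : ℝ} (ha : 0 < a) (hab : a ≤ b) :
    Real.exp b * expIntE1 b ≤ Real.exp a * expIntE1 a := by
  rw [expIntE1_shift, expIntE1_shift]
  refine setIntegral_mono_on (integrable_aux (ha.trans_le hab)) (integrable_aux ha)
    measurableSet_Ioi fun u hu => ?_
  have hu0 : (0:ℝ) < u := hu
  gcongr


/-- For all `Ω_S, Ω_R > 0`,
`e^{(Ω_R+Ω_S)/(Ω_SΩ_R)} E₁((Ω_R+Ω_S)/(Ω_SΩ_R)) ≤
 min(e^{1/Ω_S} E₁(1/Ω_S), e^{1/Ω_R} E₁(1/Ω_R))`;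
equivalently, for Rayleigh fading links the throughput of conventional
relaying without buffer never exceeds that of conventional relaying with
buffer, i.e. `τ_conv,1 ≤ τ_conv,2`. -/
theorem conv_relaying_buffer_gain (ΩS ΩR : ℝ) (hS : 0 < ΩS) (hR : 0 < ΩR) :
    Real.exp ((ΩR + ΩS) / (ΩS * ΩR)) * expIntE1 ((ΩR + ΩS) / (ΩS * ΩR))
      ≤ min (Real.exp (1 / ΩS) * expIntE1 (1 / ΩS))
            (Real.exp (1 / ΩR) * expIntE1 (1 / ΩR)) := by
  have hc : (ΩR + ΩS) / (ΩS * ΩR) = 1/ΩS + 1/ΩR := by field_simp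
  have h1 : (0:ℝ) < 1/ΩR := by positivity
  have h2 : (0:ℝ) < 1/ΩS := by positivity
  refine le_min ?_ ?_ <;> rw [hc]
  · exact key_mono h2 (by linarith)
  · exact key_mono h1 (by linarith)
end
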